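/- Suppose the 2n×2n symplectic matrices S_k(λ) (k = 0,…,N) satisfy Ψ(S_k(λ)) ≥ 0 for all λ, and Z_{N+1}(λ) is a differentiable symplectic family with Ψ(Z_{N+1}(λ)) ≤ 0 for all λ. Define Z_k(λ) := S_k(λ)⁻¹ Z_{k+1}(λ) for k = N,…,0. Then Ψ(Z_k(λ)) ≤ 0 for all λ and all k = 0,…,N+1. -/

import Mathlib

/-! For symplectic `S` one has `Jᵀ S⁻¹ = Sᵀ Jᵀ` and `(S⁻¹)' = -S⁻¹ S' S⁻¹`, which turn `Ψ` of
`S⁻¹ Z` into the congruence `Sᵀ (Ψ(Z) - Ψ(S)) S`. Hence `-Ψ(S⁻¹ Z) = Sᵀ Ψ(S) S + Sᵀ (-Ψ(Z)) S` is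
positive semidefinite whenever `Ψ(S) ≥ 0 ≥ Ψ(Z)`, and backward induction from `Z_{N+1}` gives the
claim. -/

open Matrix
noncomputable section

/-- The standard symplectic matrix `J = [[0, I], [-I, 0]]`. -/
def Jmat (k : Type*) [Fintype k] [DecidableEq k] : Matrix (k ⊕ k) (k ⊕ k) ℝ :=
  fromBlocks 0 1 (-1) 0

/-- A matrix `S` is symplectic if `Sᵀ J S = J`. -/
def IsSymplectic {k : Type*} [Fintype k] [DecidableEq k]
    (S : Matrix (k ⊕ k) (k ⊕ k) ℝ) : Prop :=
  Sᵀ * Jmat k * S = Jmat k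

/-- `S'` is the (entrywise) derivative family of the matrix family `S`. -/
def HasMatDeriv {k m : Type*} (S S' : ℝ → Matrix k m ℝ) : Prop :=
  ∀ (l : ℝ) (i : k) (j : m), HasDerivAt (fun t => S t i j) (S' l i j) l

/-- `Ψ(S(λ)) = Jᵀ S'(λ) S(λ)⁻¹`, where `S'` is a derivative family of `S`. -/
def Psi {k : Type*} [Fintype k] [DecidableEq k]
    (S S' : ℝ → Matrix (k ⊕ k) (k ⊕ k) ℝ) (l : ℝ) : Matrix (k ⊕ k) (k ⊕ k) ℝ :=
  (Jmat k)ᵀ * S' l * (S l)⁻¹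

section Symplectic

variable {k : Type*} [Fintype k] [DecidableEq k]

theorem transpose_Jmat_mul_Jmat : (Jmat k)ᵀ * Jmat k = 1 := by
  rw [Jmat, fromBlocks_transpose, fromBlocks_multiply, ← fromBlocks_one]
  simp

namespace IsSymplectic

variable {S : Matrix (k ⊕ k) (k ⊕ k) ℝ}

theorem left_inverse (h : IsSymplectic S) : (Jmat k)ᵀ * Sᵀ * Jmat k * S = 1 := by
  rw [Matrix.mul_assoc, Matrix.mul_assoc, ← Matrix.mul_assoc Sᵀ, h, transpose_Jmat_mul_Jmat]

theorem inv_eq (h : IsSymplectic S) : S⁻¹ = (Jmat k)ᵀ * Sᵀ * Jmat k :=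
  inv_eq_left_inv h.left_inverse

theorem isUnit_det (h : IsSymplectic S) : IsUnit S.det :=
  isUnit_det_of_left_inverse h.left_inverse

theorem transpose_Jmat_mul_inv (h : IsSymplectic S) : (Jmat k)ᵀ * S⁻¹ = Sᵀ * (Jmat k)ᵀ := by
  have hT : Sᵀ * (Jmat k)ᵀ * S = (Jmat k)ᵀ := by
    simpa [Matrix.transpose_mul, Matrix.mul_assoc] using congrArg Matrix.transpose h
  calc (Jmat k)ᵀ * S⁻¹ = Sᵀ * (Jmat k)ᵀ * S * S⁻¹ := by rw [hT]
    _ = Sᵀ * (Jmat k)ᵀ := mul_nonsing_inv_cancel_right _ _ h.isUnit_det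

end IsSymplectic

end Symplectic

namespace HasMatDeriv

variable {m p q : Type*}

theorem const (C : Matrix m q ℝ) : HasMatDeriv (fun _ => C) (fun _ => 0) :=
  fun l i j => hasDerivAt_const l (C i j)

theorem mul [Fintype p] {A A' : ℝ → Matrix m p ℝ} {B B' : ℝ → Matrix p q ℝ}
    (hA : HasMatDeriv A A') (hB : HasMatDeriv B B') :
    HasMatDeriv (fun l => A l * B l) (fun l => A' l * B l + A l * B' l) := by
  intro l i j
  simpa only [Matrix.mul_apply, Matrix.add_apply, Finset.sum_add_distrib] using
    HasDerivAt.fun_sum fun x _ => (hA l i x).fun_mul (hB l x j)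

theorem transpose {A A' : ℝ → Matrix m p ℝ} (hA : HasMatDeriv A A') :
    HasMatDeriv (fun l => (A l)ᵀ) (fun l => (A' l)ᵀ) :=
  fun l i j => hA l j i

theorem unique {A A' A'' : ℝ → Matrix m q ℝ} (h' : HasMatDeriv A A') (h'' : HasMatDeriv A A'')
    (l : ℝ) : A' l = A'' l :=
  Matrix.ext fun i j => (h' l i j).unique (h'' l i j)

theorem congr_deriv {A A' A'' : ℝ → Matrix m q ℝ} (hA : HasMatDeriv A A') (h : A' = A'') :
    HasMatDeriv A A'' :=
  h ▸ hA

theorem const_mul_mul {r s : Type*} [Fintype m] [Fintype q] (C : Matrix r m ℝ) (D : Matrix q s ℝ)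
    {A A' : ℝ → Matrix m q ℝ} (hA : HasMatDeriv A A') :
    HasMatDeriv (fun l => C * A l * D) (fun l => C * A' l * D) :=
  ((const C).mul hA |>.mul (const D)).congr_deriv (by simp)

theorem inv [Fintype m] [DecidableEq m] {A A' T' : ℝ → Matrix m m ℝ} (hA : HasMatDeriv A A')
    (hunit : ∀ l, IsUnit (A l).det) (hT : HasMatDeriv (fun l => (A l)⁻¹) T') :
    HasMatDeriv (fun l => (A l)⁻¹) (fun l => -((A l)⁻¹ * A' l * (A l)⁻¹)) := by
  refine hT.congr_deriv (funext fun l => ?_)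
  have hconst : (fun l => (A l)⁻¹ * A l) = fun _ => 1 := funext fun l => nonsing_inv_mul _ (hunit l)
  have hzero : T' l * A l + (A l)⁻¹ * A' l = 0 := (hT.mul hA).unique (hconst ▸ const 1) l
  calc T' l = T' l * A l * (A l)⁻¹ := (mul_nonsing_inv_cancel_right _ _ (hunit l)).symm
    _ = -((A l)⁻¹ * A' l * (A l)⁻¹) := by rw [eq_neg_of_add_eq_zero_left hzero, neg_mul]

theorem inv_of_isSymplectic {k : Type*} [Fintype k] [DecidableEq k]
    {S S' : ℝ → Matrix (k ⊕ k) (k ⊕ k) ℝ} (hS : ∀ l, IsSymplectic (S l)) (hd : HasMatDeriv S S') :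
    HasMatDeriv (fun l => (S l)⁻¹) (fun l => -((S l)⁻¹ * S' l * (S l)⁻¹)) := by
  have hT : HasMatDeriv (fun l => (S l)⁻¹) (fun l => (Jmat k)ᵀ * (S' l)ᵀ * Jmat k) := by
    rw [funext fun l => (hS l).inv_eq]
    exact hd.transpose.const_mul_mul _ _
  exact hd.inv (fun l => (hS l).isUnit_det) hT

end HasMatDeriv

section Psi

variable {k : Type*} [Fintype k] [DecidableEq k] {S S' Z Z' : ℝ → Matrix (k ⊕ k) (k ⊕ k) ℝ}

theorem Psi_inv_mul {l : ℝ} (hS : IsSymplectic (S l)) (hZ : IsUnit (Z l).det) :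
    Psi (fun l => (S l)⁻¹ * Z l) (fun l => -((S l)⁻¹ * S' l * (S l)⁻¹) * Z l + (S l)⁻¹ * Z' l) l
      = (S l)ᵀ * (Psi Z Z' l - Psi S S' l) * S l := by
  simp only [Psi]
  rw [Matrix.mul_inv_rev, nonsing_inv_nonsing_inv _ hS.isUnit_det]
  calc _ = -((Jmat k)ᵀ * (S l)⁻¹ * S' l * (S l)⁻¹ * (Z l * (Z l)⁻¹) * S l)
        + (Jmat k)ᵀ * (S l)⁻¹ * Z' l * (Z l)⁻¹ * S l := by noncomm_ring
    _ = _ := by rw [hS.transpose_Jmat_mul_inv, mul_nonsing_inv _ hZ]; noncomm_ring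

theorem posSemidef_neg_Psi_inv_mul {W' : ℝ → Matrix (k ⊕ k) (k ⊕ k) ℝ}
    (hS : ∀ l, IsSymplectic (S l)) (hdS : HasMatDeriv S S') (hdZ : HasMatDeriv Z Z')
    (hdW : HasMatDeriv (fun l => (S l)⁻¹ * Z l) W') {l : ℝ} (hSpos : (Psi S S' l).PosSemidef)
    (hZneg : (-Psi Z Z' l).PosSemidef) :
    (-Psi (fun l => (S l)⁻¹ * Z l) W' l).PosSemidef := by
  by_cases hZ : IsUnit (Z l).det
  · have hsplit : -((S l)ᵀ * (Psi Z Z' l - Psi S S' l) * S l)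
        = (S l)ᵀ * Psi S S' l * S l + (S l)ᵀ * (-Psi Z Z' l) * S l := by noncomm_ring
    rw [funext (hdW.unique ((HasMatDeriv.inv_of_isSymplectic hS hdS).mul hdZ)),
      Psi_inv_mul (hS l) hZ, hsplit, ← conjTranspose_eq_transpose_of_trivial]
    exact (hSpos.conjTranspose_mul_mul_same _).add (hZneg.conjTranspose_mul_mul_same _)
  · -- `S⁻¹ Z` is singular, so its inverse, hence its `Ψ`, is the junk value `0`.
    have hW : ¬IsUnit ((S l)⁻¹ * Z l).det := by
      rw [det_mul, IsUnit.mul_iff]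
      exact fun h => hZ h.2
    simp only [Psi, nonsing_inv_apply_not_isUnit _ hW, Matrix.mul_zero, neg_zero]
    exact PosSemidef.zero

end Psi

theorem statement8_general (n N : ℕ)
    (S S' : Fin (N + 1) → ℝ → Matrix (Fin n ⊕ Fin n) (Fin n ⊕ Fin n) ℝ)
    (Z Z' : Fin (N + 2) → ℝ → Matrix (Fin n ⊕ Fin n) (Fin n ⊕ Fin n) ℝ)
    (hS : ∀ k l, IsSymplectic (S k l))
    (hdS : ∀ k, HasMatDeriv (S k) (S' k))
    (hSpos : ∀ k l, (Psi (S k) (S' k) l).PosSemidef)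
    (hdZ : ∀ k, HasMatDeriv (Z k) (Z' k))
    (hZneg : ∀ l, (-(Psi (Z (Fin.last (N + 1))) (Z' (Fin.last (N + 1))) l)).PosSemidef)
    (hrec : ∀ (k : Fin (N + 1)) (l : ℝ), Z k.castSucc l = (S k l)⁻¹ * Z k.succ l) :
    ∀ (k : Fin (N + 2)) (l : ℝ), (-(Psi (Z k) (Z' k) l)).PosSemidef := by
  intro k
  induction k using Fin.reverseInduction with
  | last => exact hZneg
  | cast i ih =>
    intro l
    have hdW := hdZ i.castSucc
    rw [show Z i.castSucc = fun l => (S i l)⁻¹ * Z i.succ l from funext (hrec i)] at hdW ⊢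
    exact posSemidef_neg_Psi_inv_mul (hS i) (hdS i) (hdZ i.succ) hdW (hSpos i l) (ih l)

/-- if `Ψ(S_k(λ)) ≥ 0` for all `k, λ`, `Ψ(Z_{N+1}(λ)) ≤ 0`, and
`Z_k(λ) = S_k(λ)⁻¹ Z_{k+1}(λ)`, then `Ψ(Z_k(λ)) ≤ 0` for all `k = 0, …, N+1` and all `λ`. -/
theorem statement8 (n N : ℕ)
    (S S' : Fin (N + 1) → ℝ → Matrix (Fin n ⊕ Fin n) (Fin n ⊕ Fin n) ℝ)
    (Z Z' : Fin (N + 2) → ℝ → Matrix (Fin n ⊕ Fin n) (Fin n ⊕ Fin n) ℝ)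
    (hS : ∀ k l, IsSymplectic (S k l))
    (hdS : ∀ k, HasMatDeriv (S k) (S' k))
    (hSpos : ∀ k l, (Psi (S k) (S' k) l).PosSemidef)
    (hZlast : ∀ l, IsSymplectic (Z (Fin.last (N + 1)) l))
    (hdZ : ∀ k, HasMatDeriv (Z k) (Z' k))
    (hZneg : ∀ l, (-(Psi (Z (Fin.last (N + 1))) (Z' (Fin.last (N + 1))) l)).PosSemidef)
    (hrec : ∀ (k : Fin (N + 1)) (l : ℝ), Z k.castSucc l = (S k l)⁻¹ * Z k.succ l) :
    ∀ (k : Fin (N + 2)) (l : ℝ), (-(Psi (Z k) (Z' k) l)).PosSemidef :=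
  statement8_general n N S S' Z Z' hS hdS hSpos hdZ hZneg hrec
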